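/- arXiv:2011.08934 — 2 statements merged into one kernel-verified Lean document; each statement's English description precedes it below -/
import Mathlib

section
/- Fix ℓ ∈ (0, 1) and τ ∈ (0, π/2). Then the curve (t, γ, θ)(τ) = (τ, γ(τ), θ(τ)) satisfies the null-worldline condition for the AdS₃ metric ds² = (1/sin²γ)(−dt² + dγ² + cos²γ dθ²): namely, (γ′(τ))² + cos²(γ(τ))·(θ′(τ))² = 1, where γ′ and θ′ are the derivatives of γ and θ at τ. -/
open Real

/-- Tortoise coordinate `γ(τ)` along the null geodesic of angular momentum `ℓ`:
`γ(τ) = arctan(√(1−ℓ²)·tan τ / √(1+ℓ²·tan²τ))` for `τ ∈ [0, π/2)`, with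
`γ(π/2) = arctan(√(1−ℓ²)/ℓ)` if `ℓ > 0` and `π/2` if `ℓ = 0`, and
`γ(τ) = γ(π − τ)` for `τ ∈ (π/2, π]`. -/
noncomputable def tortoiseGamma (l τ : ℝ) : ℝ :=
  if τ < π / 2 then
    Real.arctan (Real.sqrt (1 - l ^ 2) * Real.tan τ /
      Real.sqrt (1 + l ^ 2 * Real.tan τ ^ 2))
  else if τ = π / 2 then
    (if 0 < l then Real.arctan (Real.sqrt (1 - l ^ 2) / l) else π / 2)
  else
    Real.arctan (Real.sqrt (1 - l ^ 2) * Real.tan (π - τ) /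
      Real.sqrt (1 + l ^ 2 * Real.tan (π - τ) ^ 2))

/-- Boundary angle `θ(τ)` along the null geodesic of angular momentum `ℓ`:
`θ(τ) = arctan(ℓ·tan τ)` for `τ ∈ [0, π/2)`, `θ(π/2) = π/2`, and
`θ(τ) = π − θ(π − τ)` for `τ ∈ (π/2, π]`. -/
noncomputable def boundaryTheta (l τ : ℝ) : ℝ :=
  if τ < π / 2 then Real.arctan (l * Real.tan τ)
  else if τ = π / 2 then π / 2
  else π - Real.arctan (l * Real.tan (π - τ))

/-! Below `π/2` both coordinates are explicit functions of `u = tan τ`, with `du/dτ = 1 + u²`.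
Writing `S = √(1 + ℓ²u²)` and `L² + ℓ² = 1`, one finds `γ′ = L / S`, `θ′ = ℓ(1 + u²)/S²` and
`cos² γ = S²/(1 + u²)`, because `1 + (Lu/S)² = (1 + u²)/S²`. The null condition then reduces to
`L² + ℓ²(1 + u²) = S²`. -/

section Derivatives

variable {a b x : ℝ}

lemma hasDerivAt_tan_of_cos_ne_zero (hx : cos x ≠ 0) : HasDerivAt tan (1 + tan x ^ 2) x := by
  have h := hasDerivAt_tan hx
  rwa [← inv_one_add_tan_sq hx, one_div, inv_inv] at h

lemma hasDerivAt_arctan_const_mul_tan (a : ℝ) (hx : cos x ≠ 0) :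
    HasDerivAt (fun y => arctan (a * tan y))
      (a * (1 + tan x ^ 2) / (1 + a ^ 2 * tan x ^ 2)) x := by
  convert ((hasDerivAt_tan_of_cos_ne_zero hx).const_mul a).arctan using 1
  field_simp

lemma one_add_sq_mul_div_sqrt (hab : a ^ 2 + b ^ 2 = 1) (u : ℝ) :
    1 + (a * u / √(1 + b ^ 2 * u ^ 2)) ^ 2 = (1 + u ^ 2) / (1 + b ^ 2 * u ^ 2) := by
  have hS : 0 < 1 + b ^ 2 * u ^ 2 := by positivity
  rw [div_pow, sq_sqrt hS.le]
  field_simp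
  linear_combination u ^ 2 * hab

lemma hasDerivAt_arctan_mul_tan_div_sqrt (hab : a ^ 2 + b ^ 2 = 1) (hx : cos x ≠ 0) :
    HasDerivAt (fun y => arctan (a * tan y / √(1 + b ^ 2 * tan y ^ 2)))
      (a / √(1 + b ^ 2 * tan x ^ 2)) x := by
  have htan := hasDerivAt_tan_of_cos_ne_zero hx
  set u := tan x
  have hpos : 0 < 1 + b ^ 2 * u ^ 2 := by positivity
  have hS : 0 < √(1 + b ^ 2 * u ^ 2) := sqrt_pos.mpr hpos
  have hden : HasDerivAt (fun y => √(1 + b ^ 2 * tan y ^ 2))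
      (b ^ 2 * (2 * u * (1 + u ^ 2)) / (2 * √(1 + b ^ 2 * u ^ 2))) x := by
    convert (((htan.fun_pow 2).const_mul (b ^ 2)).const_add 1).sqrt hpos.ne' using 1
    ring
  have hquot : HasDerivAt (fun y => a * tan y / √(1 + b ^ 2 * tan y ^ 2))
      ((a * (1 + u ^ 2) * √(1 + b ^ 2 * u ^ 2) - a * u * (b ^ 2 * (2 * u * (1 + u ^ 2)) /
        (2 * √(1 + b ^ 2 * u ^ 2)))) / √(1 + b ^ 2 * u ^ 2) ^ 2) x :=
    (htan.const_mul a).div hden hS.ne'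
  convert hquot.arctan using 1
  rw [one_add_sq_mul_div_sqrt hab]
  field_simp
  rw [sq_sqrt hpos.le]
  ring

lemma cos_sq_arctan_mul_div_sqrt (hab : a ^ 2 + b ^ 2 = 1) (u : ℝ) :
    cos (arctan (a * u / √(1 + b ^ 2 * u ^ 2))) ^ 2 = (1 + b ^ 2 * u ^ 2) / (1 + u ^ 2) := by
  rw [cos_sq_arctan, one_add_sq_mul_div_sqrt hab, one_div, inv_div]

end Derivatives

section Geodesic

variable {l τ : ℝ}

lemma sq_sqrt_one_sub_sq_add_sq (hl : l ^ 2 ≤ 1) : √(1 - l ^ 2) ^ 2 + l ^ 2 = 1 := by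
  rw [sq_sqrt (sub_nonneg.mpr hl)]
  ring

lemma tortoiseGamma_of_lt (hτ : τ < π / 2) :
    tortoiseGamma l τ = arctan (√(1 - l ^ 2) * tan τ / √(1 + l ^ 2 * tan τ ^ 2)) :=
  if_pos hτ

lemma boundaryTheta_of_lt (hτ : τ < π / 2) : boundaryTheta l τ = arctan (l * tan τ) :=
  if_pos hτ

lemma hasDerivAt_tortoiseGamma (hl : l ^ 2 ≤ 1) (hτ : τ ∈ Set.Ioo (-(π / 2)) (π / 2)) :
    HasDerivAt (tortoiseGamma l) (√(1 - l ^ 2) / √(1 + l ^ 2 * tan τ ^ 2)) τ := by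
  refine (hasDerivAt_arctan_mul_tan_div_sqrt (sq_sqrt_one_sub_sq_add_sq hl)
    (cos_pos_of_mem_Ioo hτ).ne').congr_of_eventuallyEq ?_
  filter_upwards [Iio_mem_nhds hτ.2] with x hx using tortoiseGamma_of_lt hx

lemma hasDerivAt_boundaryTheta (hτ : τ ∈ Set.Ioo (-(π / 2)) (π / 2)) :
    HasDerivAt (boundaryTheta l) (l * (1 + tan τ ^ 2) / (1 + l ^ 2 * tan τ ^ 2)) τ := by
  refine (hasDerivAt_arctan_const_mul_tan l (cos_pos_of_mem_Ioo hτ).ne').congr_of_eventuallyEq ?_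
  filter_upwards [Iio_mem_nhds hτ.2] with x hx using boundaryTheta_of_lt hx

end Geodesic

/-- For `ℓ ∈ (0,1)` and `τ ∈ (0, π/2)`, the curve `(τ, γ(τ), θ(τ))` satisfies the
null-worldline condition `(γ′(τ))² + cos²(γ(τ))·(θ′(τ))² = 1` for the AdS₃ metric
`ds² = (1/sin²γ)(−dt² + dγ² + cos²γ dθ²)`. -/
theorem null_worldline_condition (l τ : ℝ) (hl : l ∈ Set.Ioo (0 : ℝ) 1)
    (hτ : τ ∈ Set.Ioo 0 (π / 2)) :
    DifferentiableAt ℝ (tortoiseGamma l) τ ∧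
    DifferentiableAt ℝ (boundaryTheta l) τ ∧
    (deriv (tortoiseGamma l) τ) ^ 2 +
        Real.cos (tortoiseGamma l τ) ^ 2 * (deriv (boundaryTheta l) τ) ^ 2 = 1 := by
  have hl2 : l ^ 2 ≤ 1 := pow_le_one₀ hl.1.le hl.2.le
  have hτ' : τ ∈ Set.Ioo (-(π / 2)) (π / 2) := ⟨by linarith [hτ.1, pi_pos], hτ.2⟩
  have hγ := hasDerivAt_tortoiseGamma hl2 hτ'
  have hθ := hasDerivAt_boundaryTheta (l := l) hτ'
  refine ⟨hγ.differentiableAt, hθ.differentiableAt, ?_⟩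
  have hS : 0 < 1 + l ^ 2 * tan τ ^ 2 := by positivity
  rw [hγ.deriv, hθ.deriv, tortoiseGamma_of_lt hτ.2,
    cos_sq_arctan_mul_div_sqrt (sq_sqrt_one_sub_sq_add_sq hl2), div_pow, sq_sqrt hS.le,
    sq_sqrt (sub_nonneg.mpr hl2)]
  field_simp
  ring
end

section
/- Fix ℓ ∈ [0, 1]. For every τ ∈ [0, π/2], the two inequalities θ(τ) − γ(τ) ≤ τ and τ ≤ θ(τ) + γ(τ) hold; that is, the starting-point contributions δt_f(τ) = γ(τ) + θ(τ) − τ and δt_b(τ) = γ(τ) − θ(τ) − τ satisfy δt_f(τ) ≥ 0 and δt_b(τ) ≤ 0. -/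
open Real

set_option maxHeartbeats 1000000 in
private lemma arctan_nonneg' {x : ℝ} (h : 0 ≤ x) : 0 ≤ Real.arctan x := by
  have := Real.arctan_strictMono.monotone h
  rwa [Real.arctan_zero] at this

set_option maxHeartbeats 1000000 in
/-- Key inequality: `arctan t ≤ θ + γ` for `t ≥ 0`. -/
private lemma key_ineq (l t : ℝ) (hl0 : 0 ≤ l) (hl1 : l ≤ 1) (ht : 0 ≤ t) :
    Real.arctan t ≤ Real.arctan (l * t) +
      Real.arctan (Real.sqrt (1 - l ^ 2) * t / Real.sqrt (1 + l ^ 2 * t ^ 2)) := by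
  set L := Real.sqrt (1 - l ^ 2) with hLdef
  set f := Real.sqrt (1 + l ^ 2 * t ^ 2) with hfdef
  have hf2 : f ^ 2 = 1 + l ^ 2 * t ^ 2 := Real.sq_sqrt (by positivity)
  have hfpos : 0 < f := Real.sqrt_pos.2 (by positivity)
  have hL2 : L ^ 2 = 1 - l ^ 2 := Real.sq_sqrt (by nlinarith)
  have hL : 0 ≤ L := Real.sqrt_nonneg _
  set γ := Real.arctan (L * t / f) with hγdef
  set θ := Real.arctan (l * t) with hθdef
  have hγ0 : 0 ≤ γ := arctan_nonneg' (by positivity)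
  have hγ2 : γ < π / 2 := Real.arctan_lt_pi_div_two _
  have hθ0 : 0 ≤ θ := arctan_nonneg' (by positivity)
  have hθτ : θ ≤ Real.arctan t :=
    Real.arctan_strictMono.monotone (by nlinarith)
  have hτ2 : Real.arctan t < π / 2 := Real.arctan_lt_pi_div_two _
  rw [← sub_le_iff_le_add']
  by_contra hcon
  push_neg at hcon
  have hmem1 : γ ∈ Set.Icc (-(π / 2)) (π / 2) := ⟨by linarith, hγ2.le⟩
  have hmem2 : Real.arctan t - θ ∈ Set.Icc (-(π / 2)) (π / 2) :=
    ⟨by linarith, by linarith⟩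
  have hsin := Real.strictMonoOn_sin hmem1 hmem2 hcon
  -- compute the sines
  have hs : (0:ℝ) < Real.sqrt (1 + t ^ 2) := by positivity
  set s := Real.sqrt (1 + t ^ 2) with hsdef
  have hs2 : s ^ 2 = 1 + t ^ 2 := Real.sq_sqrt (by positivity)
  have hsinθ : Real.sin θ = l * t / f := by
    rw [hθdef, Real.sin_arctan]
    congr 2
    ring
  have hcosθ : Real.cos θ = 1 / f := by
    rw [hθdef, Real.cos_arctan]
    congr 2
    ring
  have hsinτ : Real.sin (Real.arctan t) = t / s := Real.sin_arctan t
  have hcosτ : Real.cos (Real.arctan t) = 1 / s := Real.cos_arctan t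
  have hsqγ : Real.sqrt (1 + (L * t / f) ^ 2) = s / f := by
    have h1 : 1 + (L * t / f) ^ 2 = (s / f) ^ 2 := by
      field_simp
      nlinarith [hL2, hf2, hs2]
    rw [h1, Real.sqrt_sq (by positivity)]
  have hsinγ : Real.sin γ = L * t / s := by
    rw [hγdef, Real.sin_arctan, hsqγ]
    field_simp
  have hsinsub : Real.sin (Real.arctan t - θ) = (1 - l) * t / (s * f) := by
    rw [Real.sin_sub, hsinτ, hcosτ, hsinθ, hcosθ]
    field_simp
  rw [hsinγ, hsinsub] at hsin
  -- contradiction: (1-l)*t/(s*f) ≤ L*t/s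
  have hkey : 1 - l ≤ L * f := by
    have h1 : L * f = Real.sqrt ((1 - l ^ 2) * (1 + l ^ 2 * t ^ 2)) := by
      rw [Real.sqrt_mul (by nlinarith)]
    have h2 : (1 - l : ℝ) = Real.sqrt ((1 - l) ^ 2) :=
      (Real.sqrt_sq (by linarith)).symm
    rw [h1, h2]
    apply Real.sqrt_le_sqrt
    nlinarith [mul_nonneg (sub_nonneg.2 hl1) hl0,
      mul_nonneg (mul_nonneg (sub_nonneg.2 hl1) hl0) (mul_nonneg hl0 (sq_nonneg t)),
      mul_nonneg (mul_nonneg (mul_nonneg (sub_nonneg.2 hl1) hl0) (mul_nonneg hl0 hl0)) (sq_nonneg t)]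
  have : L * t / s < (1 - l) * t / (s * f) := hsin
  rw [div_lt_div_iff₀ hs (by positivity)] at this
  nlinarith [mul_nonneg (mul_nonneg ht hs.le) (sub_nonneg.2 hkey)]

set_option maxHeartbeats 1000000 in
/-- Starting-point contributions: for `ℓ ∈ [0,1]` and `τ ∈ [0, π/2]`,
`θ(τ) − γ(τ) ≤ τ` and `τ ≤ θ(τ) + γ(τ)`; that is, `δt_f(τ) = γ(τ) + θ(τ) − τ ≥ 0`
and `δt_b(τ) = γ(τ) − θ(τ) − τ ≤ 0`. -/
theorem starting_point_contributions (l : ℝ) (hl : l ∈ Set.Icc (0 : ℝ) 1) :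
    ∀ τ ∈ Set.Icc 0 (π / 2),
      boundaryTheta l τ - tortoiseGamma l τ ≤ τ ∧
      τ ≤ boundaryTheta l τ + tortoiseGamma l τ := by
  obtain ⟨hl0, hl1⟩ := hl
  intro τ hτ
  obtain ⟨hτ0, hτ2⟩ := hτ
  rcases lt_or_eq_of_le hτ2 with hlt | heq
  · -- τ < π/2
    have ht : 0 ≤ Real.tan τ := Real.tan_nonneg_of_nonneg_of_le_pi_div_two hτ0 hlt.le
    have hτa : Real.arctan (Real.tan τ) = τ :=
      Real.arctan_tan (by linarith [Real.pi_pos]) hlt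
    simp only [boundaryTheta, tortoiseGamma, if_pos hlt]
    constructor
    · have h1 : Real.arctan (l * Real.tan τ) ≤ τ := by
        calc Real.arctan (l * Real.tan τ) ≤ Real.arctan (Real.tan τ) :=
              Real.arctan_strictMono.monotone (by nlinarith)
          _ = τ := hτa
      have h2 : 0 ≤ Real.arctan (Real.sqrt (1 - l ^ 2) * Real.tan τ /
          Real.sqrt (1 + l ^ 2 * Real.tan τ ^ 2)) :=
        arctan_nonneg' (by positivity)
      linarith
    · have := key_ineq l (Real.tan τ) hl0 hl1 ht
      rwa [hτa] at this
  · -- τ = π/2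
    subst heq
    have hbt : boundaryTheta l (π / 2) = π / 2 := by
      unfold boundaryTheta; rw [if_neg (lt_irrefl _), if_pos rfl]
    have htg : tortoiseGamma l (π / 2) =
        if 0 < l then Real.arctan (Real.sqrt (1 - l ^ 2) / l) else π / 2 := by
      unfold tortoiseGamma; rw [if_neg (lt_irrefl _), if_pos rfl]
    rw [hbt, htg]
    split_ifs with h
    · have h1 : 0 ≤ Real.arctan (Real.sqrt (1 - l ^ 2) / l) :=
        arctan_nonneg' (by positivity)
      constructor <;> linarith
    · constructor <;> linarith [Real.pi_pos]
end
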